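/- Let $K$ be a field of characteristic zero and $K((w))$ the field of formal Laurent series. Let $N_n \subset \mathrm{Mat}_n$ denote strictly lower triangular nilpotent matrices. Given $\Lambda \in N_n(K((w)))\,\frac{dw}{w}$ a connection matrix (i.e., given any strictly lower triangular $\Lambda$ with Laurent series entries), there exists a unique gauge transformation $G \in 1 + w^{-1} N_n(K[w^{-1}])$ such that $G^{-1}\Lambda G - G^{-1} dG$ has at worst logarithmic singularities (i.e., lies in $N_n(K[[w]])\frac{dw}{w}$). -/
import Mathlib


/-- Formal derivative `d/dw` of a formal Laurent series. -/
noncomputable def lderiv {K : Type*} [Field K] (f : LaurentSeries K) : LaurentSeries K where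
  coeff n := ((n + 1 : ℤ) : K) * f.coeff (n + 1)
  isPWO_support' := by
    apply Set.IsPWO.mono
      (Set.IsPWO.image_of_monotone f.isPWO_support'
        (f := fun n : ℤ => n - 1) (fun x y h => by simpa using h))
    intro n hn
    have h1 : f.coeff (n + 1) ≠ 0 := by
      intro h
      apply hn
      simp only [Function.mem_support, not_not] at *
      simp [h]
    exact ⟨n + 1, h1, by ring⟩

namespace Stmt7Aux

variable {K : Type*} [Field K]

@[simp] lemma lderiv_coeff (f : LaurentSeries K) (m : ℤ) :
    (lderiv f).coeff m = ((m + 1 : ℤ) : K) * f.coeff (m + 1) := rfl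

lemma lderiv_add (f g : LaurentSeries K) : lderiv (f + g) = lderiv f + lderiv g := by
  ext m
  simp [lderiv_coeff, mul_add]

lemma lderiv_sub (f g : LaurentSeries K) : lderiv (f - g) = lderiv f - lderiv g := by
  ext m
  simp [lderiv_coeff, mul_sub]

lemma lderiv_zero : lderiv (0 : LaurentSeries K) = 0 := by
  ext m; simp

lemma lderiv_one : lderiv (1 : LaurentSeries K) = 0 := by
  ext m
  by_cases h : (m + 1 : ℤ) = 0
  · simp [lderiv_coeff, h]
  · simp [lderiv_coeff, HahnSeries.coeff_one, h]

lemma lderiv_one_matrix {n : ℕ} (i j : Fin n) :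
    lderiv ((1 : Matrix (Fin n) (Fin n) (LaurentSeries K)) i j) = 0 := by
  by_cases h : i = j
  · subst h
    rw [Matrix.one_apply_eq]
    exact lderiv_one
  · rw [Matrix.one_apply_ne h]
    exact lderiv_zero

/-- negative-support part solving the derivative equation -/
noncomputable def solveN (C : LaurentSeries K) : LaurentSeries K where
  coeff k := if k < 0 then C.coeff (k - 1) / ((k : ℤ) : K) else 0
  isPWO_support' := by
    apply Set.IsPWO.mono
      (Set.IsPWO.image_of_monotone C.isPWO_support'
        (f := fun n : ℤ => n + 1) (fun x y h => by simpa using h))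
    intro k hk
    simp only [Function.mem_support] at hk
    have h1 : C.coeff (k - 1) ≠ 0 := by
      intro h; apply hk; simp [h]
    exact ⟨k - 1, h1, by ring⟩

/-- log-pole part -/
noncomputable def solveB (C : LaurentSeries K) : LaurentSeries K where
  coeff m := if -1 ≤ m then C.coeff m else 0
  isPWO_support' := by
    apply Set.IsPWO.mono C.isPWO_support'
    intro m hm
    simp only [Function.mem_support] at hm ⊢
    intro h; apply hm; simp [h]

@[simp] lemma solveN_coeff (C : LaurentSeries K) (k : ℤ) :
    (solveN C).coeff k = if k < 0 then C.coeff (k - 1) / ((k : ℤ) : K) else 0 := rfl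

@[simp] lemma solveB_coeff (C : LaurentSeries K) (m : ℤ) :
    (solveB C).coeff m = if -1 ≤ m then C.coeff m else 0 := rfl

lemma solveN_coeff_nonneg (C : LaurentSeries K) (m : ℤ) (hm : 0 ≤ m) :
    (solveN C).coeff m = 0 := by simp [not_lt.2 hm]

lemma solveB_coeff_lt (C : LaurentSeries K) (m : ℤ) (hm : m < -1) :
    (solveB C).coeff m = 0 := by simp [not_le.2 hm]

lemma solveN_zero : solveN (0 : LaurentSeries K) = 0 := by
  ext k; simp

lemma solveB_zero : solveB (0 : LaurentSeries K) = 0 := by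
  ext m; simp

lemma lderiv_solve [CharZero K] (C : LaurentSeries K) :
    lderiv (solveN C) + solveB C = C := by
  ext m
  rcases le_or_gt (-1) m with h | h
  · have : ¬ (m + 1 < 0) := by omega
    simp [this, h]
  · have h1 : m + 1 < 0 := by omega
    have h2 : ¬ (-1 ≤ m) := by omega
    have h3 : ((m + 1 : ℤ) : K) ≠ 0 := by
      exact_mod_cast (by omega : (m + 1 : ℤ) ≠ 0)
    simp only [HahnSeries.coeff_add, lderiv_coeff, solveN_coeff, solveB_coeff, if_pos h1,
      if_neg h2, add_zero]
    rw [show m + 1 - 1 = m by ring, mul_div_cancel₀ _ h3]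

lemma decomp_unique [CharZero K] (M D : LaurentSeries K)
    (hM : ∀ m : ℤ, 0 ≤ m → M.coeff m = 0) (hD : ∀ m : ℤ, m < -1 → D.coeff m = 0)
    (h : lderiv M + D = 0) : M = 0 ∧ D = 0 := by
  have hc : ∀ m : ℤ, ((m + 1 : ℤ) : K) * M.coeff (m + 1) + D.coeff m = 0 := by
    intro m
    have := congrArg (fun f : LaurentSeries K => f.coeff m) h
    simpa using this
  have hM0 : M = 0 := by
    ext k
    rcases le_or_gt 0 k with hk | hk
    · simp [hM k hk]
    · have h1 := hc (k - 1)
      rw [show k - 1 + 1 = k by ring] at h1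
      rw [hD (k - 1) (by omega)] at h1
      have h3 : ((k : ℤ) : K) ≠ 0 := by
        exact_mod_cast (by omega : (k : ℤ) ≠ 0)
      simp only [add_zero] at h1
      have := mul_eq_zero.1 h1
      simp only [HahnSeries.coeff_zero]
      tauto
  refine ⟨hM0, ?_⟩
  ext m
  rcases le_or_gt (-1) m with hm | hm
  · have h1 := hc m
    rw [hM0] at h1
    simpa using h1
  · simp [hD m hm]

/-- index set of intermediate indices -/
def idx {n : ℕ} (i j : Fin n) : Finset (Fin n) :=
  Finset.univ.filter fun k => j < k ∧ k < i

lemma mem_idx {n : ℕ} {i j k : Fin n} : k ∈ idx i j ↔ j < k ∧ k < i := by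
  simp [idx]

/-- the recursively defined gauge data: first component is `N = G - 1`,
second component is the log-connection matrix `B`. -/
noncomputable def NB {n : ℕ} (Λ : Matrix (Fin n) (Fin n) (LaurentSeries K)) (i j : Fin n) :
    LaurentSeries K × LaurentSeries K :=
  let C : LaurentSeries K := Λ i j +
    ∑ k ∈ (idx i j).attach,
      (Λ i k.1 * (NB Λ k.1 j).1 - (NB Λ i k.1).1 * (NB Λ k.1 j).2)
  (solveN C, solveB C)
termination_by i.val - j.val
decreasing_by
  all_goals
    (have hk := k.2;
     simp only [idx, Finset.mem_filter, Finset.mem_univ, true_and, Fin.lt_def] at hk;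
     omega)

noncomputable def Cm {n : ℕ} (Λ : Matrix (Fin n) (Fin n) (LaurentSeries K)) (i j : Fin n) :
    LaurentSeries K :=
  Λ i j + ∑ k ∈ idx i j, (Λ i k * (NB Λ k j).1 - (NB Λ i k).1 * (NB Λ k j).2)

lemma NB_spec {n : ℕ} (Λ : Matrix (Fin n) (Fin n) (LaurentSeries K)) (i j : Fin n) :
    NB Λ i j = (solveN (Cm Λ i j), solveB (Cm Λ i j)) := by
  rw [NB]
  unfold Cm
  rw [Finset.sum_attach (idx i j)
    (fun k => Λ i k * (NB Λ k j).1 - (NB Λ i k).1 * (NB Λ k j).2)]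

lemma NB_fst {n : ℕ} (Λ : Matrix (Fin n) (Fin n) (LaurentSeries K)) (i j : Fin n) :
    (NB Λ i j).1 = solveN (Cm Λ i j) := by rw [NB_spec]

lemma NB_snd {n : ℕ} (Λ : Matrix (Fin n) (Fin n) (LaurentSeries K)) (i j : Fin n) :
    (NB Λ i j).2 = solveB (Cm Λ i j) := by rw [NB_spec]

lemma N_coeff_nonneg {n : ℕ} (Λ : Matrix (Fin n) (Fin n) (LaurentSeries K)) (i j : Fin n)
    (m : ℤ) (hm : 0 ≤ m) : ((NB Λ i j).1).coeff m = 0 := by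
  rw [NB_fst]; exact solveN_coeff_nonneg _ m hm

lemma B_coeff_lt {n : ℕ} (Λ : Matrix (Fin n) (Fin n) (LaurentSeries K)) (i j : Fin n)
    (m : ℤ) (hm : m < -1) : ((NB Λ i j).2).coeff m = 0 := by
  rw [NB_snd]; exact solveB_coeff_lt _ m hm

lemma idx_empty {n : ℕ} {i j : Fin n} (h : ¬ j < i) : idx i j = ∅ := by
  ext k
  simp only [mem_idx, Finset.notMem_empty, iff_false]
  rintro ⟨h1, h2⟩
  exact h (h1.trans h2)

lemma Cm_tri {n : ℕ} (Λ : Matrix (Fin n) (Fin n) (LaurentSeries K))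
    (hΛ : ∀ i j : Fin n, ¬ j < i → Λ i j = 0) (i j : Fin n) (h : ¬ j < i) :
    Cm Λ i j = 0 := by
  unfold Cm
  rw [idx_empty h, Finset.sum_empty, hΛ i j h, add_zero]

lemma N_tri {n : ℕ} (Λ : Matrix (Fin n) (Fin n) (LaurentSeries K))
    (hΛ : ∀ i j : Fin n, ¬ j < i → Λ i j = 0) (i j : Fin n) (h : ¬ j < i) :
    (NB Λ i j).1 = 0 := by
  rw [NB_fst, Cm_tri Λ hΛ i j h, solveN_zero]

lemma B_tri {n : ℕ} (Λ : Matrix (Fin n) (Fin n) (LaurentSeries K))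
    (hΛ : ∀ i j : Fin n, ¬ j < i → Λ i j = 0) (i j : Fin n) (h : ¬ j < i) :
    (NB Λ i j).2 = 0 := by
  rw [NB_snd, Cm_tri Λ hΛ i j h, solveB_zero]

lemma key [CharZero K] {n : ℕ} (Λ : Matrix (Fin n) (Fin n) (LaurentSeries K)) (i j : Fin n) :
    lderiv ((NB Λ i j).1) + (NB Λ i j).2 =
      Λ i j + ∑ k ∈ idx i j, (Λ i k * (NB Λ k j).1 - (NB Λ i k).1 * (NB Λ k j).2) := by
  rw [NB_fst, NB_snd, lderiv_solve]
  rfl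

/-- The gauge equation, entrywise. -/
lemma eq_iff {n : ℕ} (Λ N' B' : Matrix (Fin n) (Fin n) (LaurentSeries K))
    (hΛ : ∀ i j : Fin n, ¬ j < i → Λ i j = 0)
    (hN' : ∀ i j : Fin n, ¬ j < i → N' i j = 0)
    (hB' : ∀ i j : Fin n, ¬ j < i → B' i j = 0) :
    (Λ * (1 + N') - Matrix.of (fun i j => lderiv ((1 + N') i j)) = (1 + N') * B')
      ↔ ∀ i j : Fin n, lderiv (N' i j) + B' i j =
          Λ i j + ∑ k ∈ idx i j, (Λ i k * N' k j - N' i k * B' k j) := by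
  rw [← Matrix.ext_iff]
  refine forall_congr' fun i => forall_congr' fun j => ?_
  have e1 : (Λ * (1 + N') - Matrix.of (fun i j => lderiv ((1 + N') i j))) i j
      = Λ i j + (Λ * N') i j - lderiv (N' i j) := by
    rw [mul_add, Matrix.mul_one, Matrix.sub_apply, Matrix.add_apply, Matrix.of_apply,
      Matrix.add_apply, lderiv_add, lderiv_one_matrix, zero_add]
  have e2 : ((1 + N') * B') i j = B' i j + (N' * B') i j := by
    rw [add_mul, Matrix.one_mul, Matrix.add_apply]
  have e3 : (Λ * N') i j = ∑ k ∈ idx i j, Λ i k * N' k j := by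
    rw [Matrix.mul_apply]
    refine (Finset.sum_subset (Finset.subset_univ _) fun k _ hk => ?_).symm
    rw [mem_idx] at hk
    push_neg at hk
    by_cases h1 : j < k
    · rw [hΛ i k (not_lt.2 (hk h1)), zero_mul]
    · rw [hN' k j h1, mul_zero]
  have e4 : (N' * B') i j = ∑ k ∈ idx i j, N' i k * B' k j := by
    rw [Matrix.mul_apply]
    refine (Finset.sum_subset (Finset.subset_univ _) fun k _ hk => ?_).symm
    rw [mem_idx] at hk
    push_neg at hk
    by_cases h1 : j < k
    · rw [hN' i k (not_lt.2 (hk h1)), zero_mul]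
    · rw [hB' k j h1, mul_zero]
  rw [e1, e2, e3, e4, Finset.sum_sub_distrib]
  constructor
  · intro h
    linear_combination -h
  · intro h
    linear_combination -h

end Stmt7Aux

open Stmt7Aux in
/-- Formal version of Deligne's canonical extension. -/
theorem stmt7 (K : Type*) [Field K] [CharZero K] (n : ℕ)
    (Λ : Matrix (Fin n) (Fin n) (LaurentSeries K))
    (hΛ : ∀ i j : Fin n, ¬ j < i → Λ i j = 0) :
    ∃! G : Matrix (Fin n) (Fin n) (LaurentSeries K),
      (∀ i j : Fin n, ¬ j < i → (G - 1) i j = 0) ∧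
      (∀ i j : Fin n, ∀ m : ℤ, 0 ≤ m → ((G - 1) i j).coeff m = 0) ∧
      ∃ B : Matrix (Fin n) (Fin n) (LaurentSeries K),
        Λ * G - Matrix.of (fun i j => lderiv (G i j)) = G * B ∧
        (∀ i j : Fin n, ¬ j < i → B i j = 0) ∧
        (∀ i j : Fin n, ∀ m : ℤ, m < -1 → (B i j).coeff m = 0) := by
  set N : Matrix (Fin n) (Fin n) (LaurentSeries K) := Matrix.of fun i j => (NB Λ i j).1 with hN
  set B : Matrix (Fin n) (Fin n) (LaurentSeries K) := Matrix.of fun i j => (NB Λ i j).2 with hB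
  have hNtri : ∀ i j : Fin n, ¬ j < i → N i j = 0 := fun i j h => N_tri Λ hΛ i j h
  have hBtri : ∀ i j : Fin n, ¬ j < i → B i j = 0 := fun i j h => B_tri Λ hΛ i j h
  have hG1 : (1 + N) - 1 = N := add_sub_cancel_left 1 N
  refine ⟨1 + N, ⟨?_, ?_, B, ?_, hBtri, ?_⟩, ?_⟩
  · intro i j h
    rw [hG1]
    exact hNtri i j h
  · intro i j m hm
    rw [hG1]
    exact N_coeff_nonneg Λ i j m hm
  · rw [eq_iff Λ N B hΛ hNtri hBtri]
    intro i j
    exact key Λ i j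
  · intro i j m hm
    exact B_coeff_lt Λ i j m hm
  · -- uniqueness
    rintro G' ⟨htri, hcoeff, B', heq, hBtri', hBcoeff⟩
    set N' : Matrix (Fin n) (Fin n) (LaurentSeries K) := G' - 1 with hN'
    have hG' : G' = 1 + N' := by rw [hN']; abel
    rw [hG'] at heq
    rw [eq_iff Λ N' B' hΛ htri hBtri'] at heq
    have main : ∀ d : ℕ, ∀ i j : Fin n, i.val - j.val = d →
        N' i j = N i j ∧ B' i j = B i j := by
      intro d
      induction d using Nat.strong_induction_on with
      | _ d ih =>
        intro i j hd
        by_cases hij : j < i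
        · have hkey := key Λ i j
          have heqij := heq i j
          have hsum : ∑ k ∈ idx i j, (Λ i k * N' k j - N' i k * B' k j)
              = ∑ k ∈ idx i j, (Λ i k * (NB Λ k j).1 - (NB Λ i k).1 * (NB Λ k j).2) := by
            refine Finset.sum_congr rfl fun k hk => ?_
            rw [mem_idx, Fin.lt_def, Fin.lt_def] at hk
            have h1 := ih (k.val - j.val) (by omega) k j rfl
            have h2 := ih (i.val - k.val) (by omega) i k rfl
            rw [h1.1, h1.2, h2.1]
            rfl
          rw [hsum] at heqij
          have hzero : lderiv (N' i j - N i j) + (B' i j - B i j) = 0 := by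
            rw [lderiv_sub]
            have : lderiv (N i j) + B i j =
                Λ i j + ∑ k ∈ idx i j,
                  (Λ i k * (NB Λ k j).1 - (NB Λ i k).1 * (NB Λ k j).2) := hkey
            linear_combination heqij - this
          have hd1 : ∀ m : ℤ, 0 ≤ m → (N' i j - N i j).coeff m = 0 := by
            intro m hm
            have h0 : (N i j).coeff m = 0 := N_coeff_nonneg Λ i j m hm
            rw [HahnSeries.coeff_sub, hcoeff i j m hm, h0, sub_zero]
          have hd2 : ∀ m : ℤ, m < -1 → (B' i j - B i j).coeff m = 0 := by
            intro m hm
            have h0 : (B i j).coeff m = 0 := B_coeff_lt Λ i j m hm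
            rw [HahnSeries.coeff_sub, hBcoeff i j m hm, h0, sub_zero]
          obtain ⟨hh1, hh2⟩ := decomp_unique _ _ hd1 hd2 hzero
          exact ⟨sub_eq_zero.mp hh1, sub_eq_zero.mp hh2⟩
        · rw [htri i j hij, hBtri' i j hij, hNtri i j hij, hBtri i j hij]
          exact ⟨rfl, rfl⟩
    have hNeq : N' = N := Matrix.ext fun i j => (main (i.val - j.val) i j rfl).1
    rw [hG', hNeq]
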